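/- arXiv:1712.03056 — 6 statements merged into one kernel-verified Lean document; each statement's English description precedes it below -/
import Mathlib

section
/- Every finite-dimensional normed vector space V over a complete discretely valued non-archimedean field admits an orthogonal basis, i.e. a basis {v_1,…,v_d} such that ||Σ λ_i v_i|| = max_i |λ_i|·||v_i|| for all scalars λ_i. -/
/-!
Induction on the dimension. Given an orthogonal basis `e` of a hyperplane `W` and `x ∉ W`, pick
`w₀ ∈ W` minimising `N (x - w)`; then `y = x - w₀` satisfies
`N (c • y + w) = max (v c * N y) (N w)` for `w ∈ W`, so `y` extends `e` to an orthogonal basis.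
The minimum exists for two reasons. `W` has an orthogonal basis over a complete field, hence is
complete, so `x` has positive distance from `W`. And a non-minimal value `N (x - w) > N (x - w')`
equals `N (w' - w)`, which lies in the discrete set `⋃ i, N (e i) * σ ^ ℤ`, finite above any
positive bound.
-/

open Filter Topology Set

lemma iSup_fin_succ_eq_max {n : ℕ} (g : Fin (n + 1) → ℝ) (hg : ∀ i, 0 ≤ g i) :
    ⨆ i, g i = max (⨆ i : Fin n, g i.castSucc) (g (Fin.last n)) := by
  have hbdd := (Set.finite_range g).bddAbove
  refine le_antisymm (Real.iSup_le (fun i => ?_) ((hg _).trans (le_max_right _ _)))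
    (max_le (Real.iSup_le (fun i => le_ciSup hbdd _) ((hg 0).trans (le_ciSup hbdd 0)))
      (le_ciSup hbdd _))
  induction i using Fin.lastCases with
  | last => exact le_max_right _ _
  | cast j =>
    exact (le_ciSup (f := fun i : Fin n => g i.castSucc) (Set.finite_range _).bddAbove j).trans
      (le_max_left _ _)

lemma finite_setOf_mul_zpow_mem_Icc {c σ δ b : ℝ} (hc : 0 < c) (hδ : 0 < δ)
    (hσ0 : 0 < σ) (hσ1 : σ < 1) : {k : ℤ | c * σ ^ k ∈ Icc δ b}.Finite := by
  have hb : 0 < max b δ := hδ.trans_le (le_max_right b δ)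
  obtain ⟨m, hm⟩ := exists_pow_lt_of_lt_one (div_pos hδ hc) hσ1
  obtain ⟨m', hm'⟩ := exists_pow_lt_of_lt_one (div_pos hc hb) hσ1
  refine BddBelow.finite_of_bddAbove ⟨-m', fun k ⟨_, hkb⟩ => ?_⟩ ⟨m, fun k ⟨hkδ, _⟩ => ?_⟩
  · by_contra! hk
    have h := zpow_lt_zpow_right_of_lt_one₀ hσ0 hσ1 hk
    rw [zpow_neg, zpow_natCast] at h
    rw [lt_div_iff₀ hb, ← lt_div_iff₀' (by positivity), div_eq_mul_inv] at hm'
    nlinarith [le_max_left b δ]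
  · by_contra! hk
    have h := zpow_lt_zpow_right_of_lt_one₀ hσ0 hσ1 hk
    rw [zpow_natCast] at h
    rw [lt_div_iff₀ hc] at hm
    nlinarith

lemma exists_forall_le_of_finite_inter_Icc {α : Type*} [Nonempty α] {f : α → ℝ} {S : Set ℝ}
    {δ : ℝ} (hδ : ∀ a, δ ≤ f a) (hS : ∀ b, (S ∩ Icc δ b).Finite)
    (hfS : ∀ a b, f b < f a → f a ∈ S) : ∃ a, ∀ b, f a ≤ f b := by
  by_contra! h
  obtain ⟨a₀⟩ := ‹Nonempty α›
  have hfin : (range f ∩ Iic (f a₀)).Finite := by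
    refine (hS (f a₀)).subset ?_
    rintro _ ⟨⟨a, rfl⟩, ha⟩
    obtain ⟨b, hb⟩ := h a
    exact ⟨hfS a b hb, hδ a, ha⟩
  obtain ⟨_, ⟨⟨a, rfl⟩, ha⟩, hmin⟩ := exists_min_image _ id hfin ⟨f a₀, ⟨a₀, rfl⟩, self_mem_Iic⟩
  obtain ⟨b, hb⟩ := h a
  exact (hmin (f b) ⟨⟨b, rfl⟩, hb.le.trans ha⟩).not_gt hb

def IsCauchyWrt {α : Type*} [Sub α] (f : α → ℝ) (u : ℕ → α) : Prop :=
  ∀ ε : ℝ, 0 < ε → ∃ n₀ : ℕ, ∀ m n : ℕ, n₀ ≤ m → n₀ ≤ n → f (u m - u n) < ε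

def IsCompleteWrt {α : Type*} [Sub α] (f : α → ℝ) : Prop :=
  ∀ u : ℕ → α, IsCauchyWrt f u → ∃ L, Tendsto (fun n => f (u n - L)) atTop (𝓝 0)

section UltrametricNorm

variable {F V : Type*} [Field F] [AddCommGroup V] [Module F V]

structure IsUltrametricNorm (v : AbsoluteValue F ℝ) (N : V → ℝ) : Prop where
  eq_zero_iff : ∀ x, N x = 0 ↔ x = 0
  map_smul : ∀ (c : F) x, N (c • x) = v c * N x
  add_le_max : ∀ x y, N (x + y) ≤ max (N x) (N y)

def IsOrthogonal {ι : Type*} [Fintype ι] (v : AbsoluteValue F ℝ) (N : V → ℝ) (b : ι → V) :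
    Prop :=
  ∀ lam : ι → F, N (∑ i, lam i • b i) = ⨆ i, v (lam i) * N (b i)

namespace IsUltrametricNorm

variable {v : AbsoluteValue F ℝ} {N : V → ℝ} (hN : IsUltrametricNorm v N)
include hN

lemma map_zero : N 0 = 0 := (hN.eq_zero_iff 0).2 rfl

lemma map_neg (x : V) : N (-x) = N x := by
  rw [← neg_one_smul F x, hN.map_smul, v.map_neg, v.map_one, one_mul]

lemma nonneg (x : V) : 0 ≤ N x := by
  simpa [hN.map_zero, hN.map_neg] using hN.add_le_max x (-x)

lemma pos_of_ne_zero {x : V} (hx : x ≠ 0) : 0 < N x :=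
  (hN.nonneg x).lt_of_ne' (mt (hN.eq_zero_iff x).1 hx)

lemma sub_le_max (x y : V) : N (x - y) ≤ max (N x) (N y) := by
  simpa [sub_eq_add_neg, hN.map_neg] using hN.add_le_max x (-y)

lemma sub_le_max_sub (x y z : V) : N (y - z) ≤ max (N (x - y)) (N (x - z)) := by
  simpa [max_comm] using hN.sub_le_max (x - z) (x - y)

lemma add_eq_max_of_ne {x y : V} (h : N x ≠ N y) : N (x + y) = max (N x) (N y) := by
  wlog hlt : N y < N x generalizing x y
  · rw [add_comm, max_comm]
    exact this h.symm ((not_lt.1 hlt).lt_of_ne h)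
  rw [max_eq_left hlt.le]
  refine le_antisymm ((hN.add_le_max x y).trans_eq (max_eq_left hlt.le)) ?_
  by_contra! hc
  have := hN.sub_le_max (x + y) y
  rw [add_sub_cancel_right] at this
  exact (max_lt hc hlt).not_ge this

lemma sub_eq_max_of_ne {x y : V} (h : N x ≠ N y) : N (x - y) = max (N x) (N y) := by
  rw [sub_eq_add_neg, hN.add_eq_max_of_ne (by rwa [hN.map_neg]), hN.map_neg]

lemma subtype (W : Submodule F V) : IsUltrametricNorm v (fun w : W => N w) where
  eq_zero_iff w := (hN.eq_zero_iff w).trans W.coe_eq_zero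
  map_smul c w := hN.map_smul c w
  add_le_max w w' := hN.add_le_max w w'

end IsUltrametricNorm

namespace IsOrthogonal

variable {ι : Type*} [Fintype ι] {v : AbsoluteValue F ℝ} {N : V → ℝ}

lemma mul_le {b : ι → V} (hb : IsOrthogonal v N b) (lam : ι → F) (i : ι) :
    v (lam i) * N (b i) ≤ N (∑ i, lam i • b i) :=
  (hb lam).ge.trans' (le_ciSup (f := fun i => v (lam i) * N (b i)) (Set.finite_range _).bddAbove i)

lemma linearIndependent (hN : IsUltrametricNorm v N) {b : ι → V} (hb : IsOrthogonal v N b)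
    (hb0 : ∀ i, b i ≠ 0) : LinearIndependent F b := by
  refine Fintype.linearIndependent_iff.2 fun lam hlam i =>
    v.eq_zero.1 (le_antisymm ?_ (v.nonneg _))
  have h := hb.mul_le lam i
  rw [hlam, hN.map_zero] at h
  exact nonpos_of_mul_nonpos_left h (hN.pos_of_ne_zero (hb0 i))

variable {e : Module.Basis ι F V} (he : IsOrthogonal v N e)
include he

lemma eq_iSup_repr (x : V) : N x = ⨆ i, v (e.repr x i) * N (e i) := by
  conv_lhs => rw [← e.sum_repr x]
  exact he _

lemma repr_mul_le (x : V) (i : ι) : v (e.repr x i) * N (e i) ≤ N x := by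
  simpa only [e.sum_repr] using he.mul_le (e.repr x) i

lemma exists_eq_mul_zpow (hN : IsUltrametricNorm v N) {σ : ℝ}
    (hdisc : ∀ c : F, c ≠ 0 → ∃ k : ℤ, v c = σ ^ k) {x : V} (hx : x ≠ 0) :
    ∃ i, ∃ k : ℤ, N x = N (e i) * σ ^ k := by
  have hNx := hN.pos_of_ne_zero hx
  rcases isEmpty_or_nonempty ι with hι | hι
  · rw [he.eq_iSup_repr, Real.iSup_of_isEmpty] at hNx
    exact absurd hNx (lt_irrefl 0)
  obtain ⟨i, hi⟩ := exists_eq_ciSup_of_finite (f := fun i => v (e.repr x i) * N (e i))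
  have hrepr : e.repr x i ≠ 0 := by
    rintro h
    rw [← he.eq_iSup_repr, h, v.map_zero, zero_mul] at hi
    exact hNx.ne hi
  obtain ⟨k, hk⟩ := hdisc _ hrepr
  exact ⟨i, k, by rw [he.eq_iSup_repr, ← hi, hk, mul_comm]⟩

lemma isCompleteWrt (hN : IsUltrametricNorm v N) (hv : IsCompleteWrt v) : IsCompleteWrt N := by
  intro u hu
  have hpos (i : ι) : 0 < N (e i) := hN.pos_of_ne_zero (e.ne_zero i)
  have hcoord (i : ι) : IsCauchyWrt v (fun k => e.repr (u k) i) := by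
    intro ε hε
    obtain ⟨n₀, hn₀⟩ := hu (ε * N (e i)) (mul_pos hε (hpos i))
    refine ⟨n₀, fun m n hm hn => lt_of_mul_lt_mul_right ?_ (hpos i).le⟩
    simpa only [map_sub, Finsupp.sub_apply] using
      (he.repr_mul_le (u m - u n) i).trans_lt (hn₀ m n hm hn)
  choose L hL using fun i => hv _ (hcoord i)
  refine ⟨∑ i, L i • e i, squeeze_zero (fun _ => hN.nonneg _) (fun k => ?_)
    (by simpa using tendsto_finsetSum Finset.univ fun i _ => (hL i).mul_const (N (e i)))⟩
  simp only [he.eq_iSup_repr (u k - _), map_sub, Finsupp.sub_apply, e.repr_sum_self]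
  refine Real.iSup_le (fun i => ?_) (Finset.sum_nonneg fun i _ => ?_)
  · exact Finset.single_le_sum (f := fun i => v (e.repr (u k) i - L i) * N (e i))
        (fun i _ => mul_nonneg (v.nonneg _) (hN.nonneg _)) (Finset.mem_univ i)
  · exact mul_nonneg (v.nonneg _) (hN.nonneg _)

end IsOrthogonal

section Submodule

variable {ι : Type*} [Fintype ι] {v : AbsoluteValue F ℝ} {N : V → ℝ} {W : Submodule F V}
  {e : Module.Basis ι F W}

lemma IsOrthogonal.mem_of_forall_exists_sub_lt (hN : IsUltrametricNorm v N)
    (hv : IsCompleteWrt v) (he : IsOrthogonal v (fun w : W => N w) e) {x : V}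
    (hx : ∀ δ > 0, ∃ w : W, N (x - w) < δ) : x ∈ W := by
  choose w hw using fun k : ℕ => hx (1 / (k + 1)) Nat.one_div_pos_of_nat
  have hlim : Tendsto (fun k => N (x - w k)) atTop (𝓝 0) :=
    squeeze_zero (fun _ => hN.nonneg _) (fun k => (hw k).le) tendsto_one_div_add_atTop_nhds_zero_nat
  have hcauchy : IsCauchyWrt (fun w : W => N w) w := by
    intro ε hε
    obtain ⟨n₀, hn₀⟩ := Metric.tendsto_atTop.1 hlim ε hε
    refine ⟨n₀, fun m n hm hn => (hN.sub_le_max_sub x _ _).trans_lt (max_lt ?_ ?_)⟩ <;>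
      simpa [abs_of_nonneg (hN.nonneg _)] using hn₀ _ ‹_›
  obtain ⟨L, hL⟩ := he.isCompleteWrt (hN.subtype W) hv w hcauchy
  have hxL : N (x - L) ≤ 0 := by
    refine ge_of_tendsto' ((hlim.max hL).trans (by rw [max_self])) fun k => ?_
    simpa using hN.add_le_max (x - w k) (w k - L)
  rw [sub_eq_zero.1 ((hN.eq_zero_iff _).1 (hxL.antisymm (hN.nonneg _)))]
  exact L.2

lemma IsOrthogonal.exists_forall_sub_le (hN : IsUltrametricNorm v N) (hv : IsCompleteWrt v)
    {σ : ℝ} (hσ0 : 0 < σ) (hσ1 : σ < 1) (hdisc : ∀ c : F, c ≠ 0 → ∃ k : ℤ, v c = σ ^ k)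
    (he : IsOrthogonal v (fun w : W => N w) e) {x : V} (hx : x ∉ W) :
    ∃ w₀ : W, ∀ w : W, N (x - w₀) ≤ N (x - w) := by
  obtain ⟨δ, hδ, hδle⟩ : ∃ δ > 0, ∀ w : W, δ ≤ N (x - w) := by
    by_contra! h
    exact hx (he.mem_of_forall_exists_sub_lt hN hv h)
  refine exists_forall_le_of_finite_inter_Icc (f := fun w : W => N (x - w))
    (S := ⋃ i, range fun k : ℤ => N (e i) * σ ^ k) hδle (fun b => ?_) (fun w w' hlt => ?_)
  · rw [iUnion_inter]
    refine finite_iUnion fun i => ?_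
    rw [← image_preimage_eq_range_inter]
    exact (finite_setOf_mul_zpow_mem_Icc ((hN.subtype W).pos_of_ne_zero (e.ne_zero i))
      hδ hσ0 hσ1).image _
  · have hdist : N (x - w) = N ((w' - w : W) : V) := by
      rw [W.coe_sub, show (w' : V) - w = (x - w) - (x - w') by abel,
        hN.sub_eq_max_of_ne hlt.ne', max_eq_left hlt.le]
    obtain ⟨i, k, hik⟩ := he.exists_eq_mul_zpow (hN.subtype W) hdisc
      (x := w' - w) (sub_ne_zero.2 fun h => hlt.ne' (by simp only [h]))
    exact mem_iUnion.2 ⟨i, k, (hdist.trans hik).symm⟩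

end Submodule

lemma IsUltrametricNorm.smul_add_eq_max {v : AbsoluteValue F ℝ} {N : V → ℝ}
    (hN : IsUltrametricNorm v N) {W : Submodule F V} {y : V} (hy : ∀ w ∈ W, N y ≤ N (y + w))
    (c : F) {w : V} (hw : w ∈ W) : N (c • y + w) = max (v c * N y) (N w) := by
  rcases eq_or_ne c 0 with rfl | hc
  · simp [max_eq_right (hN.nonneg w)]
  have hcw : N (y + c⁻¹ • w) = max (N y) (N (c⁻¹ • w)) := by
    rcases eq_or_ne (N y) (N (c⁻¹ • w)) with heq | hne
    · refine le_antisymm (hN.add_le_max _ _) ?_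
      rw [← heq, max_self]
      exact hy _ (W.smul_mem _ hw)
    · exact hN.add_eq_max_of_ne hne
  rw [show c • y + w = c • (y + c⁻¹ • w) by rw [smul_add, smul_smul, mul_inv_cancel₀ hc, one_smul],
    hN.map_smul, hcw, mul_max_of_nonneg _ _ (v.nonneg c), hN.map_smul, ← mul_assoc, ← map_mul,
    mul_inv_cancel₀ hc, map_one, one_mul]

lemma IsOrthogonal.snoc {v : AbsoluteValue F ℝ} {N : V → ℝ} (hN : IsUltrametricNorm v N)
    {n : ℕ} {W : Submodule F V} {e : Fin n → W} (he : IsOrthogonal v (fun w : W => N w) e)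
    {y : V} (hy : ∀ (c : F) (w : W), N (c • y + w) = max (v c * N y) (N w)) :
    IsOrthogonal v N (Fin.snoc (fun i => (e i : V)) y : Fin (n + 1) → V) := by
  intro lam
  have hsum : ∑ i, lam i • (Fin.snoc (fun i => (e i : V)) y : Fin (n + 1) → V) i =
      lam (Fin.last n) • y + ((∑ i : Fin n, lam i.castSucc • e i : W) : V) := by
    simp [Fin.sum_univ_castSucc, add_comm]
  rw [hsum, hy, show N _ = _ from he fun i => lam i.castSucc,
    iSup_fin_succ_eq_max _ fun i => mul_nonneg (v.nonneg _) (hN.nonneg _), max_comm]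
  simp

theorem exists_isOrthogonal_basis {v : AbsoluteValue F ℝ} (hv : IsCompleteWrt v) {σ : ℝ}
    (hσ0 : 0 < σ) (hσ1 : σ < 1) (hdisc : ∀ c : F, c ≠ 0 → ∃ k : ℤ, v c = σ ^ k)
    {N : V → ℝ} (hN : IsUltrametricNorm v N) {n : ℕ} (b : Module.Basis (Fin n) F V) :
    ∃ b' : Module.Basis (Fin n) F V, IsOrthogonal v N b' := by
  induction n generalizing V with
  | zero => exact ⟨b, fun lam => by simp [hN.map_zero]⟩
  | succ n ih =>
    have hb := b.linearIndependent
    rw [← Fin.snoc_init_self ⇑b, linearIndependent_finSnoc] at hb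
    obtain ⟨hli, hx⟩ := hb
    set W := Submodule.span F (range (Fin.init ⇑b))
    obtain ⟨e, he⟩ := ih (hN.subtype W) (Module.Basis.span hli)
    obtain ⟨w₀, hw₀⟩ := he.exists_forall_sub_le hN hv hσ0 hσ1 hdisc hx
    set y := b (Fin.last n) - w₀
    have hy0 : y ≠ 0 := fun h => hx (sub_eq_zero.1 h ▸ w₀.2)
    have hyW : ∀ w ∈ W, N y ≤ N (y + w) := fun w hw => by
      simpa [y, sub_add] using hw₀ (w₀ - ⟨w, hw⟩)
    have horth := he.snoc hN fun c w => hN.smul_add_eq_max hyW c w.2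
    have hli' := horth.linearIndependent hN
      (Fin.lastCases (by simpa using hy0) fun i => by simpa using e.ne_zero i)
    have hcard : Fintype.card (Fin (n + 1)) = Module.finrank F V := by
      simp [Module.finrank_eq_card_basis b]
    exact ⟨basisOfLinearIndependentOfCardEqFinrank hli' hcard, by simpa using horth⟩

end UltrametricNorm

theorem stmt6_general {F V : Type*} [Field F] [AddCommGroup V] [Module F V] [FiniteDimensional F V]
    (v : AbsoluteValue F ℝ)
    (σ : ℝ) (hσ0 : 0 < σ) (hσ1 : σ < 1)
    (hdisc : ∀ x : F, x ≠ 0 → ∃ n : ℤ, v x = σ ^ n)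
    (hcomplete : ∀ a : ℕ → F,
      (∀ ε : ℝ, 0 < ε → ∃ n₀ : ℕ, ∀ m n : ℕ, n₀ ≤ m → n₀ ≤ n → v (a m - a n) < ε) →
      ∃ L : F, Tendsto (fun n => v (a n - L)) atTop (nhds 0))
    (N : V → ℝ)
    (hN0 : ∀ x : V, N x = 0 ↔ x = 0)
    (hNsmul : ∀ (c : F) (x : V), N (c • x) = v c * N x)
    (hNadd : ∀ x y : V, N (x + y) ≤ max (N x) (N y)) :
    ∃ b : Module.Basis (Fin (Module.finrank F V)) F V,
      ∀ lam : Fin (Module.finrank F V) → F,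
        N (∑ i, lam i • b i) = ⨆ i, v (lam i) * N (b i) :=
  exists_isOrthogonal_basis hcomplete hσ0 hσ1 hdisc ⟨hN0, hNsmul, hNadd⟩ (Module.finBasis F V)

/-- Every finite-dimensional normed vector space over a complete discretely valued non-archimedean field admits an orthogonal basis. -/
theorem stmt6 {F V : Type*} [Field F] [AddCommGroup V] [Module F V] [FiniteDimensional F V]
    (v : AbsoluteValue F ℝ) (hna : ∀ x y : F, v (x + y) ≤ max (v x) (v y))
    (σ : ℝ) (hσ0 : 0 < σ) (hσ1 : σ < 1)
    (hdisc : ∀ x : F, x ≠ 0 → ∃ n : ℤ, v x = σ ^ n)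
    (hcomplete : ∀ a : ℕ → F,
      (∀ ε : ℝ, 0 < ε → ∃ n₀ : ℕ, ∀ m n : ℕ, n₀ ≤ m → n₀ ≤ n → v (a m - a n) < ε) →
      ∃ L : F, Tendsto (fun n => v (a n - L)) atTop (nhds 0))
    (N : V → ℝ)
    (hN0 : ∀ x : V, N x = 0 ↔ x = 0)
    (hNsmul : ∀ (c : F) (x : V), N (c • x) = v c * N x)
    (hNadd : ∀ x y : V, N (x + y) ≤ max (N x) (N y)) :
    ∃ b : Module.Basis (Fin (Module.finrank F V)) F V,
      ∀ lam : Fin (Module.finrank F V) → F,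
        N (∑ i, lam i • b i) = ⨆ i, v (lam i) * N (b i) :=
  stmt6_general v σ hσ0 hσ1 hdisc hcomplete N hN0 hNsmul hNadd
end

section
/- If V is a finite-dimensional normed vector space over a complete discretely valued non-archimedean field F, then the set of norm values ||V \ {0}|| is a discrete subset of ℝ. -/
open Filter

/-- The set of nonzero norm values of a finite-dimensional normed vector space over a complete discretely valued non-archimedean field is discrete in ℝ. -/
theorem stmt7 {F V : Type*} [Field F] [AddCommGroup V] [Module F V] [FiniteDimensional F V]
    (v : AbsoluteValue F ℝ) (hna : ∀ x y : F, v (x + y) ≤ max (v x) (v y))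
    (σ : ℝ) (hσ0 : 0 < σ) (hσ1 : σ < 1)
    (hdisc : ∀ x : F, x ≠ 0 → ∃ n : ℤ, v x = σ ^ n)
    (hcomplete : ∀ a : ℕ → F,
      (∀ ε : ℝ, 0 < ε → ∃ n₀ : ℕ, ∀ m n : ℕ, n₀ ≤ m → n₀ ≤ n → v (a m - a n) < ε) →
      ∃ L : F, Tendsto (fun n => v (a n - L)) atTop (nhds 0))
    (N : V → ℝ)
    (hN0 : ∀ x : V, N x = 0 ↔ x = 0)
    (hNsmul : ∀ (c : F) (x : V), N (c • x) = v c * N x)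
    (hNadd : ∀ x y : V, N (x + y) ≤ max (N x) (N y)) :
    DiscreteTopology ↥(N '' {x : V | x ≠ 0}) := by
  classical
  have hN0' : N 0 = 0 := (hN0 0).mpr rfl
  have hNneg : ∀ x : V, N (-x) = N x := by
    intro x
    have h : (-x) = (-1 : F) • x := by simp
    rw [h, hNsmul, v.map_neg, v.map_one, one_mul]
  have hNnonneg : ∀ x : V, 0 ≤ N x := by
    intro x
    have h := hNadd x (-x)
    simpa [hNneg, hN0'] using h
  have hNpos : ∀ x : V, x ≠ 0 → 0 < N x := fun x hx =>
    (hNnonneg x).lt_of_ne (fun h => hx ((hN0 x).mp h.symm))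
  have hult : ∀ a b : V, N b < N a → N (a + b) = N a := by
    intro a b h
    have h1 : N (a + b) ≤ N a := le_trans (hNadd a b) (by simp [le_of_lt h])
    have h2 : N a ≤ max (N (a + b)) (N b) := by
      have h3 := hNadd (a + b) (-b)
      simpa [hNneg] using h3
    rcases le_max_iff.mp h2 with h4 | h4
    · linarith
    · linarith
  -- key coset lemma by induction on a spanning list
  have key : ∀ l : List V, ∃ T : Finset ℝ, (∀ t ∈ T, 0 < t) ∧
      ∀ x ∈ Submodule.span F {y : V | y ∈ l}, x ≠ 0 → ∃ t ∈ T, ∃ n : ℤ, N x = t * σ ^ n := by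
    intro l
    induction l with
    | nil =>
      refine ⟨∅, by simp, ?_⟩
      intro x hx hx0
      rw [show {y : V | y ∈ ([] : List V)} = (∅ : Set V) from by simp,
        Submodule.span_empty, Submodule.mem_bot] at hx
      exact absurd hx hx0
    | cons e l ih =>
      obtain ⟨T, hTpos, hT⟩ := ih
      have hset : {y : V | y ∈ e :: l} = insert e {y : V | y ∈ l} := by
        ext y; simp [List.mem_cons]
      set W := Submodule.span F {y : V | y ∈ l} with hW
      -- the generic "non-minimal" case handler
      have main : ∀ (c : F) (z : V), z ∈ W → c ≠ 0 →
          (∃ u' ∈ W, N (e + u') < N (e + c⁻¹ • z)) →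
          ∃ t ∈ T, ∃ n : ℤ, N (c • e + z) = t * σ ^ n := by
        intro c z hzW hc hlt
        set u := c⁻¹ • z with hu
        have huW : u ∈ W := Submodule.smul_mem _ _ hzW
        obtain ⟨u', hu'W, hu'⟩ := hlt
        have hxe : c • e + z = c • (e + u) := by
          rw [smul_add, hu, smul_inv_smul₀ hc]
        have hdiff : u - u' = (e + u) + (-(e + u')) := by abel
        have hz2 : N (u - u') = N (e + u) := by
          rw [hdiff, hult _ _ (by rw [hNneg]; exact hu')]
        have hyW : c • (u - u') ∈ W := Submodule.smul_mem _ _ (Submodule.sub_mem _ huW hu'W)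
        have hNy : N (c • (u - u')) = N (c • e + z) := by
          rw [hNsmul, hz2, hxe, hNsmul]
        have hupos : 0 < N (e + u) := lt_of_le_of_lt (hNnonneg _) hu'
        have hyne : c • (u - u') ≠ 0 := by
          intro h
          have h0 : N (c • (u - u')) = 0 := by rw [h, hN0']
          rw [hNsmul, hz2] at h0
          have hvc : 0 < v c := v.pos hc
          nlinarith
        obtain ⟨t, htT, n, hn⟩ := hT _ hyW hyne
        exact ⟨t, htT, n, by rw [← hNy, hn]⟩
      by_cases hmin : ∃ u ∈ W, e + u ≠ 0 ∧ ∀ u' ∈ W, N (e + u) ≤ N (e + u')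
      · obtain ⟨u₀, hu₀W, hu₀ne, hu₀min⟩ := hmin
        refine ⟨insert (N (e + u₀)) T, ?_, ?_⟩
        · intro t ht
          rcases Finset.mem_insert.mp ht with rfl | ht
          · exact hNpos _ hu₀ne
          · exact hTpos _ ht
        · intro x hx hx0
          rw [hset] at hx
          obtain ⟨c, z, hzW, rfl⟩ := Submodule.mem_span_insert.mp hx
          by_cases hc : c = 0
          · obtain ⟨t, htT, n, hn⟩ := hT z hzW (by simpa [hc] using hx0)
            exact ⟨t, Finset.mem_insert_of_mem htT, n, by simpa [hc] using hn⟩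
          · by_cases hlt : ∃ u' ∈ W, N (e + u') < N (e + c⁻¹ • z)
            · obtain ⟨t, htT, n, hn⟩ := main c z hzW hc hlt
              exact ⟨t, Finset.mem_insert_of_mem htT, n, hn⟩
            · push_neg at hlt
              set u := c⁻¹ • z with hu
              have huW : u ∈ W := Submodule.smul_mem _ _ hzW
              have heu : N (e + u) = N (e + u₀) :=
                le_antisymm (hlt u₀ hu₀W) (hu₀min u huW)
              obtain ⟨n, hn⟩ := hdisc c hc
              have hxe : c • e + z = c • (e + u) := by
                rw [smul_add, hu, smul_inv_smul₀ hc]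
              exact ⟨N (e + u₀), Finset.mem_insert_self _ _, n, by
                rw [hxe, hNsmul, hn, heu, mul_comm]⟩
      · refine ⟨T, hTpos, ?_⟩
        intro x hx hx0
        rw [hset] at hx
        obtain ⟨c, z, hzW, rfl⟩ := Submodule.mem_span_insert.mp hx
        by_cases hc : c = 0
        · obtain ⟨t, htT, n, hn⟩ := hT z hzW (by simpa [hc] using hx0)
          exact ⟨t, htT, n, by simpa [hc] using hn⟩
        · apply main c z hzW hc
          by_contra h
          push_neg at h
          apply hmin
          refine ⟨c⁻¹ • z, Submodule.smul_mem _ _ hzW, ?_, h⟩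
          intro h0
          apply hx0
          have hxe : c • e + z = c • (e + c⁻¹ • z) := by
            rw [smul_add, smul_inv_smul₀ hc]
          rw [hxe, h0, smul_zero]
  -- get a finite spanning set
  obtain ⟨s, hs⟩ := Module.Finite.fg_top (R := F) (M := V)
  obtain ⟨T, hTpos, hT⟩ := key s.toList
  have hcover : ∀ x : V, x ≠ 0 → ∃ t ∈ T, ∃ n : ℤ, N x = t * σ ^ n := by
    intro x hx
    apply hT x _ hx
    have h : {y : V | y ∈ s.toList} = (s : Set V) := by ext y; simp
    rw [h, hs]
    trivial
  -- discreteness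
  rw [discreteTopology_subtype_iff]
  rintro r ⟨x, hx, rfl⟩
  have hx' : x ≠ 0 := hx
  have hrpos : 0 < N x := hNpos x hx'
  set a := N x / 2 with ha
  set b := 2 * N x with hb
  -- the candidate values in [a,b] form a finite set
  have hfin : ∀ t ∈ T, Set.Finite {y : ℝ | (∃ n : ℤ, y = t * σ ^ n) ∧ a ≤ y ∧ y ≤ b} := by
    intro t ht
    have htpos := hTpos t ht
    obtain ⟨m₁, hm₁⟩ := exists_pow_lt_of_lt_one (show (0:ℝ) < a / t by positivity) hσ1
    obtain ⟨m₂, hm₂⟩ := exists_pow_lt_of_lt_one (show (0:ℝ) < t / b by positivity) hσ1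
    have hsub : {y : ℝ | (∃ n : ℤ, y = t * σ ^ n) ∧ a ≤ y ∧ y ≤ b} ⊆
        (fun n : ℤ => t * σ ^ n) '' (Set.Icc (-(m₂ : ℤ)) (m₁ : ℤ)) := by
      rintro y ⟨⟨n, rfl⟩, hya, hyb⟩
      refine ⟨n, ⟨?_, ?_⟩, rfl⟩
      · by_contra h
        push_neg at h
        have h1 : σ ^ (-(m₂ : ℤ)) < σ ^ n := zpow_lt_zpow_right_of_lt_one₀ hσ0 hσ1 h
        have h2 : σ ^ (-(m₂ : ℤ)) = (σ ^ m₂)⁻¹ := by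
          rw [zpow_neg, zpow_natCast]
        have h3 : (0:ℝ) < σ ^ m₂ := by positivity
        have h4 : b / t < (σ ^ m₂)⁻¹ := by
          rw [lt_inv_comm₀ (by positivity) h3]
          calc σ ^ m₂ < t / b := hm₂
          _ = (b / t)⁻¹ := (inv_div b t).symm
        have h5 : σ ^ n ≤ b / t := by
          rw [le_div_iff₀ htpos]; linarith [hyb]
        rw [h2] at h1
        linarith
      · by_contra h
        push_neg at h
        have h1 : σ ^ n < σ ^ (m₁ : ℤ) := zpow_lt_zpow_right_of_lt_one₀ hσ0 hσ1 h
        have h2 : σ ^ (m₁ : ℤ) = σ ^ m₁ := zpow_natCast σ m₁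
        have h5 : a / t ≤ σ ^ n := by
          rw [div_le_iff₀ htpos]; linarith [hya]
        rw [h2] at h1
        linarith
    exact Set.Finite.subset ((Set.finite_Icc _ _).image _) hsub
  have hBfin : Set.Finite {y : ℝ | (∃ t ∈ T, ∃ n : ℤ, y = t * σ ^ n) ∧ a ≤ y ∧ y ≤ b} := by
    apply Set.Finite.subset (Set.Finite.biUnion T.finite_toSet hfin)
    rintro y ⟨⟨t, ht, n, hn⟩, hya, hyb⟩
    exact Set.mem_biUnion ht ⟨⟨n, hn⟩, hya, hyb⟩
  set B := {y : ℝ | (∃ t ∈ T, ∃ n : ℤ, y = t * σ ^ n) ∧ a ≤ y ∧ y ≤ b} with hBdef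
  have hclosed : IsClosed (B \ {N x}) := (hBfin.subset Set.diff_subset).isClosed
  have hmemc : N x ∈ (B \ {N x})ᶜ := by simp
  obtain ⟨ε₁, hε₁pos, hball⟩ := Metric.isOpen_iff.mp hclosed.isOpen_compl _ hmemc
  rw [inf_principal_eq_bot]
  rw [Metric.mem_nhdsWithin_iff]
  refine ⟨min ε₁ (N x / 2), lt_min hε₁pos (by positivity), ?_⟩
  rintro y ⟨hy1, hy2⟩
  intro hyS
  obtain ⟨z, hz, rfl⟩ := hyS
  have hzne : z ≠ 0 := hz
  have hyne : N z ≠ N x := hy2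
  have hdist : |N z - N x| < min ε₁ (N x / 2) := by
    rw [← Real.dist_eq]; exact hy1
  have hd1 : |N z - N x| < ε₁ := lt_of_lt_of_le hdist (min_le_left _ _)
  have hd2 : |N z - N x| < N x / 2 := lt_of_lt_of_le hdist (min_le_right _ _)
  have habs := abs_lt.mp hd2
  have hyB : N z ∈ B := by
    refine ⟨hcover z hzne, ?_, ?_⟩
    · rw [ha]; linarith [habs.1]
    · rw [hb]; linarith [habs.2]
  have : N z ∈ (B \ {N x})ᶜ := hball (by rw [Metric.mem_ball, Real.dist_eq]; exact hd1)
  exact this ⟨hyB, hyne⟩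
end

section
/- Every vector subspace W of a finite-dimensional normed vector space V over a complete discretely valued non-archimedean field is strictly closed: for every v ∈ V there exists w ∈ W with ||v - w|| = inf_{w' ∈ W} ||v - w'||. -/
open Filter Set

/-!
Induct on a finite generating set of `W`. If every point has a nearest point in `W`, the distance
`‖z‖_W` to `W` is again an ultrametric seminorm, and a nearest point of `F ∙ u ⊔ W` comes from a
minimiser of `ψ c := ‖y - c • u‖_W`. Ultrametricity gives
`v (c' - c) ‖u‖_W ≤ max (ψ c) (ψ c')` and `ψ c ≤ max (ψ c') (v (c' - c) ‖u‖_W)`.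
If `inf ψ = 0`, a minimising sequence is therefore Cauchy and its limit realises `0`. If
`inf ψ = d > 0`, let `s` be the next value of `v` above `d / ‖u‖_W`: any `c` with `ψ c < s ‖u‖_W`
lies within `d / ‖u‖_W` of every `c'` with `ψ c' < s ‖u‖_W`, so `ψ c ≤ max (ψ c') d = ψ c'`.
-/

def AbsoluteValue.IsComplete {F : Type*} [Field F] (v : AbsoluteValue F ℝ) : Prop :=
  ∀ a : ℕ → F,
    (∀ ε : ℝ, 0 < ε → ∃ n₀ : ℕ, ∀ m n : ℕ, n₀ ≤ m → n₀ ≤ n → v (a m - a n) < ε) →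
    ∃ L : F, Tendsto (fun n => v (a n - L)) atTop (nhds 0)

def AbsoluteValue.HasDiscreteValues {F : Type*} [Field F] (v : AbsoluteValue F ℝ) : Prop :=
  ∀ d : ℝ, 0 < d → ∃ s, d < s ∧ ∀ x : F, v x < s → v x ≤ d

theorem AbsoluteValue.hasDiscreteValues_of_zpow {F : Type*} [Field F] {v : AbsoluteValue F ℝ}
    {σ : ℝ} (hσ0 : 0 < σ) (hσ1 : σ < 1) (hdisc : ∀ x : F, x ≠ 0 → ∃ n : ℤ, v x = σ ^ n) :
    v.HasDiscreteValues := by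
  intro d hd
  have hσinv : 1 < σ⁻¹ := one_lt_inv₀ hσ0 |>.2 hσ1
  obtain ⟨n, hn, hn'⟩ := exists_mem_Ico_zpow hd hσinv
  refine ⟨σ⁻¹ ^ (n + 1), hn', fun x hx => ?_⟩
  rcases eq_or_ne x 0 with rfl | hx0
  · simpa using hd.le
  obtain ⟨k, hk⟩ := hdisc x hx0
  rw [hk, ← neg_neg k, ← inv_zpow'] at hx ⊢
  have hkn : -k ≤ n := Int.lt_add_one_iff.1 ((zpow_lt_zpow_iff_right₀ hσinv).1 hx)
  exact (zpow_le_zpow_right₀ hσinv.le hkn).trans hn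

section Line

variable {F : Type*} [Field F] {v : AbsoluteValue F ℝ} {ψ : F → ℝ} {β : ℝ}

theorem exists_forall_le_of_isGLB_zero (hcomplete : v.IsComplete) (hβ : 0 < β)
    (hψ_le : ∀ c c', ψ c ≤ max (ψ c') (v (c' - c) * β))
    (hψ_ge : ∀ c c', v (c' - c) * β ≤ max (ψ c) (ψ c'))
    (hglb : IsGLB (range ψ) 0) : ∃ c, ∀ c', ψ c ≤ ψ c' := by
  have hψ0 : ∀ c, 0 ≤ ψ c := fun c => hglb.1 ⟨c, rfl⟩
  have hsmall : ∀ n : ℕ, ∃ c, ψ c < 1 / (n + 1) := fun n => by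
    obtain ⟨_, ⟨c, rfl⟩, -, hc⟩ := hglb.exists_between (Nat.one_div_pos_of_nat (α := ℝ) (n := n))
    exact ⟨c, hc⟩
  choose c hc using hsmall
  have hlim : Tendsto (fun n => ψ (c n)) atTop (nhds 0) :=
    squeeze_zero (fun n => hψ0 _) (fun n => (hc n).le) tendsto_one_div_add_atTop_nhds_zero_nat
  have hcauchy : ∀ ε : ℝ, 0 < ε → ∃ n₀ : ℕ, ∀ m n : ℕ, n₀ ≤ m → n₀ ≤ n →
      v (c m - c n) < ε := by
    intro ε hε
    obtain ⟨n₀, hn₀⟩ := eventually_atTop.1 (hlim.eventually (gt_mem_nhds (mul_pos hε hβ)))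
    refine ⟨n₀, fun m n hm hn => ?_⟩
    exact (mul_lt_mul_iff_left₀ hβ).1 ((hψ_ge (c n) (c m)).trans_lt (max_lt (hn₀ n hn) (hn₀ m hm)))
  obtain ⟨L, hL⟩ := hcomplete c hcauchy
  have hbound : Tendsto (fun n => max (ψ (c n)) (v (c n - L) * β)) atTop (nhds 0) := by
    simpa using hlim.max (hL.mul_const β)
  exact ⟨L, fun c' => (ge_of_tendsto' hbound fun n => hψ_le L (c n)).trans (hψ0 c')⟩

theorem exists_forall_le_of_isGLB_pos (hdisc : v.HasDiscreteValues) (hβ : 0 < β)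
    (hψ_le : ∀ c c', ψ c ≤ max (ψ c') (v (c' - c) * β))
    (hψ_ge : ∀ c c', v (c' - c) * β ≤ max (ψ c) (ψ c'))
    {d : ℝ} (hglb : IsGLB (range ψ) d) (hd : 0 < d) : ∃ c, ∀ c', ψ c ≤ ψ c' := by
  obtain ⟨s, hds, hgap⟩ := hdisc _ (div_pos hd hβ)
  obtain ⟨_, ⟨c, rfl⟩, -, hc⟩ := hglb.exists_between ((div_lt_iff₀ hβ).1 hds)
  refine ⟨c, fun c' => ?_⟩
  rcases le_or_gt (s * β) (ψ c') with hc' | hc'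
  · exact hc.le.trans hc'
  have hv : v (c' - c) ≤ d / β :=
    hgap _ ((mul_lt_mul_iff_left₀ hβ).1 ((hψ_ge c c').trans_lt (max_lt hc hc')))
  have hvβ : v (c' - c) * β ≤ ψ c' := ((le_div_iff₀ hβ).1 hv).trans (hglb.1 ⟨c', rfl⟩)
  exact (hψ_le c c').trans (max_le le_rfl hvβ)

theorem exists_forall_le_of_ultrametric (hcomplete : v.IsComplete)
    (hdisc : v.HasDiscreteValues) (hβ : 0 < β)
    (hψ_le : ∀ c c', ψ c ≤ max (ψ c') (v (c' - c) * β))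
    (hψ_ge : ∀ c c', v (c' - c) * β ≤ max (ψ c) (ψ c')) (hψ0 : ∀ c, 0 ≤ ψ c) :
    ∃ c, ∀ c', ψ c ≤ ψ c' := by
  have hglb : IsGLB (range ψ) (sInf (range ψ)) :=
    Real.isGLB_sInf (range_nonempty ψ) ⟨0, forall_mem_range.2 hψ0⟩
  rcases (hglb.2 (forall_mem_range.2 hψ0)).eq_or_lt with h0 | hpos
  · exact exists_forall_le_of_isGLB_zero hcomplete hβ hψ_le hψ_ge (h0 ▸ hglb)
  · exact exists_forall_le_of_isGLB_pos hdisc hβ hψ_le hψ_ge hglb hpos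

end Line

structure IsUltraSeminorm {F V : Type*} [Field F] [AddCommGroup V] [Module F V]
    (v : AbsoluteValue F ℝ) (N : V → ℝ) : Prop where
  map_smul : ∀ (c : F) (x : V), N (c • x) = v c * N x
  map_add_le_max : ∀ x y : V, N (x + y) ≤ max (N x) (N y)

def IsProximinal {F V : Type*} [Field F] [AddCommGroup V] [Module F V]
    (N : V → ℝ) (W : Submodule F V) : Prop :=
  ∀ x, ∃ w ∈ W, ∀ w' ∈ W, N (x - w) ≤ N (x - w')

section Proximinal

variable {F V : Type*} [Field F] [AddCommGroup V] [Module F V] {v : AbsoluteValue F ℝ}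
  {N : V → ℝ}

namespace IsUltraSeminorm

theorem map_neg (hN : IsUltraSeminorm v N) (x : V) : N (-x) = N x := by
  simpa using hN.map_smul (-1) x

theorem map_zero (hN : IsUltraSeminorm v N) : N 0 = 0 := by
  simpa using hN.map_smul 0 0

theorem nonneg (hN : IsUltraSeminorm v N) (x : V) : 0 ≤ N x := by
  simpa [hN.map_neg, hN.map_zero] using hN.map_add_le_max x (-x)

theorem map_sub_le_max (hN : IsUltraSeminorm v N) (x y : V) : N (x - y) ≤ max (N x) (N y) := by
  simpa [sub_eq_add_neg, hN.map_neg] using hN.map_add_le_max x (-y)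

theorem sub_nearest (hN : IsUltraSeminorm v N) {W : Submodule F V} {p : V → V}
    (hpW : ∀ z, p z ∈ W) (hp : ∀ z, ∀ w ∈ W, N (z - p z) ≤ N (z - w)) :
    IsUltraSeminorm v fun z => N (z - p z) := by
  have hle : ∀ (c : F) z, N (c • z - p (c • z)) ≤ v c * N (z - p z) := fun c z =>
    (hp (c • z) _ (W.smul_mem c (hpW z))).trans_eq (by rw [← smul_sub, hN.map_smul])
  refine ⟨fun c z => ?_, fun x y => ?_⟩
  · rcases eq_or_ne c 0 with rfl | hc
    · simpa using (hle 0 z).antisymm (by simpa using hN.nonneg (0 - p 0))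
    refine (hle c z).antisymm ?_
    have := hle c⁻¹ (c • z)
    rwa [inv_smul_smul₀ hc, map_inv₀, le_inv_mul_iff₀ (v.pos hc)] at this
  · calc N (x + y - p (x + y)) ≤ N (x + y - (p x + p y)) := hp _ _ (W.add_mem (hpW x) (hpW y))
      _ = N ((x - p x) + (y - p y)) := by rw [add_sub_add_comm]
      _ ≤ _ := hN.map_add_le_max _ _

theorem exists_forall_le_sub_smul (hN : IsUltraSeminorm v N) (hcomplete : v.IsComplete)
    (hdisc : v.HasDiscreteValues) (y u : V) :
    ∃ c : F, ∀ c' : F, N (y - c • u) ≤ N (y - c' • u) := by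
  have hle : ∀ c c' : F, N (y - c • u) ≤ max (N (y - c' • u)) (v (c' - c) * N u) := fun c c' => by
    rw [← hN.map_smul]
    convert hN.map_add_le_max (y - c' • u) ((c' - c) • u) using 2
    rw [sub_smul]; abel
  have hge : ∀ c c' : F, v (c' - c) * N u ≤ max (N (y - c • u)) (N (y - c' • u)) := fun c c' => by
    rw [← hN.map_smul]
    convert hN.map_sub_le_max (y - c • u) (y - c' • u) using 2
    rw [sub_smul]; abel
  rcases (hN.nonneg u).eq_or_lt with hu | hu
  · refine ⟨0, fun c' => (hle 0 c').trans (max_le le_rfl ?_)⟩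
    rw [← hu, mul_zero]
    exact hN.nonneg _
  · exact exists_forall_le_of_ultrametric hcomplete hdisc hu hle hge fun c => hN.nonneg _

end IsUltraSeminorm

theorem isProximinal_bot (N : V → ℝ) : IsProximinal N (⊥ : Submodule F V) := fun x =>
  ⟨0, Submodule.zero_mem _, fun w' hw' => by rw [(Submodule.mem_bot F).1 hw']⟩

theorem IsProximinal.span_singleton_sup (hN : IsUltraSeminorm v N) (hcomplete : v.IsComplete)
    (hdisc : v.HasDiscreteValues) {W : Submodule F V} (hW : IsProximinal N W) (u : V) :
    IsProximinal N (F ∙ u ⊔ W) := by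
  choose p hpW hp using hW
  intro y
  obtain ⟨c, hc⟩ := (hN.sub_nearest hpW hp).exists_forall_le_sub_smul hcomplete hdisc y u
  refine ⟨c • u + p (y - c • u),
    Submodule.mem_sup.2 ⟨_, Submodule.mem_span_singleton.2 ⟨c, rfl⟩, _, hpW _, rfl⟩, ?_⟩
  rintro _ hw'
  obtain ⟨_, hcu, z, hz, rfl⟩ := Submodule.mem_sup.1 hw'
  obtain ⟨c', rfl⟩ := Submodule.mem_span_singleton.1 hcu
  calc N (y - (c • u + p (y - c • u))) = N (y - c • u - p (y - c • u)) := by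
        rw [sub_add_eq_sub_sub]
    _ ≤ N (y - c' • u - p (y - c' • u)) := hc c'
    _ ≤ N (y - c' • u - z) := hp _ z hz
    _ = N (y - (c' • u + z)) := by rw [sub_add_eq_sub_sub]

theorem IsProximinal.of_fg (hN : IsUltraSeminorm v N) (hcomplete : v.IsComplete)
    (hdisc : v.HasDiscreteValues) {W : Submodule F V} (hW : W.FG) : IsProximinal N W := by
  classical
  obtain ⟨s, rfl⟩ := hW
  induction s using Finset.induction_on with
  | empty => simpa using isProximinal_bot N
  | insert u s _ ih =>
    rw [Finset.coe_insert, Submodule.span_insert]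
    exact ih.span_singleton_sup hN hcomplete hdisc u

theorem IsProximinal.exists_eq_iInf (hN : IsUltraSeminorm v N) {W : Submodule F V}
    (hW : IsProximinal N W) (x : V) : ∃ w ∈ W, N (x - w) = ⨅ w₂ : W, N (x - w₂) := by
  obtain ⟨w, hw, hmin⟩ := hW x
  have hbdd : BddBelow (range fun w₂ : W => N (x - w₂)) :=
    ⟨0, forall_mem_range.2 fun _ => hN.nonneg _⟩
  exact ⟨w, hw, le_antisymm (le_ciInf fun w₂ => hmin _ w₂.2) (ciInf_le hbdd ⟨w, hw⟩)⟩

end Proximinal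

theorem stmt8_general {F V : Type*} [Field F] [AddCommGroup V] [Module F V] [FiniteDimensional F V]
    (v : AbsoluteValue F ℝ)
    (σ : ℝ) (hσ0 : 0 < σ) (hσ1 : σ < 1)
    (hdisc : ∀ x : F, x ≠ 0 → ∃ n : ℤ, v x = σ ^ n)
    (hcomplete : ∀ a : ℕ → F,
      (∀ ε : ℝ, 0 < ε → ∃ n₀ : ℕ, ∀ m n : ℕ, n₀ ≤ m → n₀ ≤ n → v (a m - a n) < ε) →
      ∃ L : F, Tendsto (fun n => v (a n - L)) atTop (nhds 0))
    (N : V → ℝ)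
    (hNsmul : ∀ (c : F) (x : V), N (c • x) = v c * N x)
    (hNadd : ∀ x y : V, N (x + y) ≤ max (N x) (N y)) :
    ∀ (W : Submodule F V) (x : V), ∃ w ∈ W, N (x - w) = ⨅ w₂ : W, N (x - w₂) := by
  have hN : IsUltraSeminorm v N := ⟨hNsmul, hNadd⟩
  have hdisc' : v.HasDiscreteValues := v.hasDiscreteValues_of_zpow hσ0 hσ1 hdisc
  intro W
  exact (IsProximinal.of_fg hN hcomplete hdisc' (IsNoetherian.noetherian W)).exists_eq_iInf hN

/-- Every subspace of a finite-dimensional normed vector space over a complete discretely valued non-archimedean field is strictly closed. -/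
theorem stmt8 {F V : Type*} [Field F] [AddCommGroup V] [Module F V] [FiniteDimensional F V]
    (v : AbsoluteValue F ℝ) (hna : ∀ x y : F, v (x + y) ≤ max (v x) (v y))
    (σ : ℝ) (hσ0 : 0 < σ) (hσ1 : σ < 1)
    (hdisc : ∀ x : F, x ≠ 0 → ∃ n : ℤ, v x = σ ^ n)
    (hcomplete : ∀ a : ℕ → F,
      (∀ ε : ℝ, 0 < ε → ∃ n₀ : ℕ, ∀ m n : ℕ, n₀ ≤ m → n₀ ≤ n → v (a m - a n) < ε) →
      ∃ L : F, Tendsto (fun n => v (a n - L)) atTop (nhds 0))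
    (N : V → ℝ)
    (hN0 : ∀ x : V, N x = 0 ↔ x = 0)
    (hNsmul : ∀ (c : F) (x : V), N (c • x) = v c * N x)
    (hNadd : ∀ x y : V, N (x + y) ≤ max (N x) (N y)) :
    ∀ (W : Submodule F V) (x : V), ∃ w ∈ W, N (x - w) = ⨅ w₂ : W, N (x - w₂) :=
  stmt8_general v σ hσ0 hσ1 hdisc hcomplete N hNsmul hNadd
end

section
/- Let Λ be an A-lattice in a finite-dimensional normed K_∞-vector space V, and let ω_1,…,ω_d be constructed greedily: ω_1 a shortest nonzero vector of Λ, and ω_i a shortest vector of Λ outside the K_∞-span of ω_1,…,ω_{i−1}. Then ||ω_i|| equals the distance of ω_i from the subspace U_{i−1} = span_{K_∞}(ω_1,…,ω_{i−1}): ||ω_i|| = inf_{u ∈ U_{i−1}} ||ω_i − u||. -/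
open scoped Classical

/-- The absolute value `|f| = σ^(ord f)` on the Laurent series field `K∞ = k((π))`,
`π = 1/T`; for a polynomial `f` in `T` this is `σ^(-deg f)`. -/
noncomputable def absLS (k : Type*) [Field k] (σ : ℝ) (f : LaurentSeries k) : ℝ :=
  if f = 0 then 0 else σ ^ f.order

/-- The embedding of `A = k[T]` into `K∞ = k((π))`, sending `T` to `π⁻¹`. -/
noncomputable def polyToLS (k : Type*) [Field k] : Polynomial k →ₐ[k] LaurentSeries k :=
  Polynomial.aeval (HahnSeries.single (1 : ℤ) (1 : k))⁻¹

/-- The `A`-lattice spanned by the vectors `b i`: all `A`-linear combinations of the `b i`. -/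
def latticeA (k : Type*) [Field k] {V : Type*} [AddCommGroup V]
    [Module (LaurentSeries k) V] {d : ℕ} (b : Fin d → V) : Set V :=
  {x | ∃ a : Fin d → Polynomial k, x = ∑ i, polyToLS k (a i) • b i}

/-!
Write `u ∈ U_{i-1}` as `∑ c_j ω_j` over `j < i` and round each `c_j ∈ K∞` to a polynomial `a_j`
with `|c_j - a_j| ≤ σ < 1`. Then `x = ω_i - ∑ a_j ω_j` is a lattice vector outside `U_{i-1}`, so the
greedy choices give `‖ω_i‖ ≤ ‖x‖` and `‖ω_j‖ ≤ ‖x‖` for `j < i`. The rounding error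
`s = ∑ (c_j - a_j) ω_j` thus has `‖s‖ ≤ σ ‖x‖`, and by the ultrametric inequality
`‖ω_i - u‖ = ‖x - s‖ = ‖x‖ ≥ ‖ω_i‖`. Taking `u = 0` shows the infimum is attained.
-/

section LaurentApprox
open Polynomial
variable {k : Type*} [Field k]

lemma polyToLS_C_mul_X_pow (r : k) (n : ℕ) :
    polyToLS k (C r * X ^ n) = HahnSeries.single (-(n : ℤ)) r := by
  have hC : algebraMap k (LaurentSeries k) r = HahnSeries.single 0 r := by
    rw [HahnSeries.algebraMap_apply', PowerSeries.algebraMap_apply, Algebra.algebraMap_self,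
      RingHom.id_apply, HahnSeries.ofPowerSeries_C, HahnSeries.C_apply]
  simp [polyToLS, HahnSeries.single_pow, hC, HahnSeries.single_mul_single]

lemma exists_coeff_sub_polyToLS_eq_zero_of_coeff_eq_zero (M : ℕ) (c : LaurentSeries k)
    (hc : ∀ z ≤ -(M : ℤ), c.coeff z = 0) :
    ∃ a : k[X], ∀ z ≤ 0, (c - polyToLS k a).coeff z = 0 := by
  induction M generalizing c with
  | zero => exact ⟨0, by simpa using hc⟩
  | succ M ih =>
    set r := c.coeff (-(M : ℤ))
    obtain ⟨a, ha⟩ := ih (c - HahnSeries.single (-(M : ℤ)) r) fun z hz => by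
      rcases hz.lt_or_eq with hz | rfl
      · rw [HahnSeries.coeff_sub, hc z (by omega), HahnSeries.coeff_single_of_ne (by omega),
          sub_zero]
      · rw [HahnSeries.coeff_sub, HahnSeries.coeff_single_same, sub_self]
    refine ⟨a + C r * X ^ M, fun z hz => ?_⟩
    rw [map_add, polyToLS_C_mul_X_pow, add_comm, ← sub_sub]
    exact ha z hz

lemma exists_coeff_sub_polyToLS_eq_zero (c : LaurentSeries k) :
    ∃ a : k[X], ∀ z ≤ 0, (c - polyToLS k a).coeff z = 0 :=
  exists_coeff_sub_polyToLS_eq_zero_of_coeff_eq_zero ((-c.order).toNat + 1) c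
    fun _ hz => HahnSeries.coeff_eq_zero_of_lt_order (by omega)

lemma absLS_le_of_coeff_eq_zero {σ : ℝ} (hσ0 : 0 < σ) (hσ1 : σ ≤ 1) {f : LaurentSeries k}
    (hf : ∀ z ≤ 0, f.coeff z = 0) : absLS k σ f ≤ σ := by
  unfold absLS
  split_ifs with h
  · exact hσ0.le
  · have : 1 ≤ f.order := by
      by_contra! hlt
      exact h (HahnSeries.coeff_order_eq_zero.mp (hf _ (by omega)))
    simpa using zpow_le_zpow_right_of_le_one₀ hσ0 hσ1 this

lemma exists_absLS_sub_polyToLS_le {σ : ℝ} (hσ0 : 0 < σ) (hσ1 : σ ≤ 1) (c : LaurentSeries k) :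
    ∃ a : k[X], absLS k σ (c - polyToLS k a) ≤ σ :=
  (exists_coeff_sub_polyToLS_eq_zero c).imp fun _ => absLS_le_of_coeff_eq_zero hσ0 hσ1

end LaurentApprox

namespace IsNonarchimedean
variable {G : Type*} [AddCommGroup G] {f : G → ℝ}

lemma nonneg (hf : IsNonarchimedean f) (h0 : f 0 = 0) (hneg : ∀ x, f (-x) = f x) (x : G) :
    0 ≤ f x := by
  simpa [h0, hneg] using hf x (-x)

lemma sum_le {ι : Type*} (hf : IsNonarchimedean f) (h0 : f 0 = 0) {s : Finset ι} {g : ι → G}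
    {c : ℝ} (hc : 0 ≤ c) (hg : ∀ t ∈ s, f (g t) ≤ c) : f (∑ t ∈ s, g t) ≤ c :=
  Finset.sum_induction g (f · ≤ c) (fun _ _ hx hy => (hf _ _).trans (max_le hx hy))
    (h0.trans_le hc) hg

lemma le_apply_sub_of_le_mul (hf : IsNonarchimedean f) (h0 : f 0 = 0) (hneg : ∀ x, f (-x) = f x)
    {σ : ℝ} (hσ : σ < 1) {x y : G} (hy : f y ≤ σ * f x) : f x ≤ f (x - y) := by
  rcases (hf.nonneg h0 hneg x).eq_or_lt with hx | hx
  · rw [← hx]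
    exact hf.nonneg h0 hneg _
  · have hlt : f (-y) < f x := by
      rw [hneg]
      nlinarith
    rw [sub_eq_add_neg, add_eq_max_of_ne' f hf (fun a => (hneg a).symm) hlt.ne']
    exact le_max_left _ _

end IsNonarchimedean

section Lattice
open Polynomial
variable {k V : Type*} [Field k] [AddCommGroup V] [Module (LaurentSeries k) V] {d : ℕ}

variable (k) in
def latticeAddSubgroup (b : Fin d → V) : AddSubgroup V where
  carrier := latticeA k b
  zero_mem' := ⟨0, by simp⟩
  add_mem' := by
    rintro _ _ ⟨a, rfl⟩ ⟨a', rfl⟩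
    exact ⟨a + a', by simp [add_smul, Finset.sum_add_distrib]⟩
  neg_mem' := by
    rintro _ ⟨a, rfl⟩
    exact ⟨-a, by simp [neg_smul]⟩

lemma polyToLS_smul_mem_latticeA (p : k[X]) {b : Fin d → V} {x : V} (hx : x ∈ latticeA k b) :
    polyToLS k p • x ∈ latticeA k b := by
  obtain ⟨a, rfl⟩ := hx
  exact ⟨fun i => p * a i, by simp [Finset.smul_sum, smul_smul]⟩

end Lattice

section GreedyBasis
variable {k V : Type*} [Field k] [AddCommGroup V] [Module (LaurentSeries k) V]
  {σ : ℝ} {N : V → ℝ} {d : ℕ} {b : Fin d → V} {ω : Fin d → V}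

theorem apply_le_apply_sub_of_mem_span (hσ0 : 0 < σ) (hσ1 : σ < 1)
    (hNsmul : ∀ (c : LaurentSeries k) (x : V), N (c • x) = absLS k σ c * N x)
    (hNadd : IsNonarchimedean N) (hωmem : ∀ i, ω i ∈ latticeA k b) {i : Fin d}
    (hωnot : ω i ∉ Submodule.span (LaurentSeries k) (ω '' {j : Fin d | j < i}))
    (hωmin : ∀ j ≤ i, ∀ x ∈ latticeA k b,
      x ∉ Submodule.span (LaurentSeries k) (ω '' {l : Fin d | l < j}) → N (ω j) ≤ N x)
    {u : V} (hu : u ∈ Submodule.span (LaurentSeries k) (ω '' {j : Fin d | j < i})) :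
    N (ω i) ≤ N (ω i - u) := by
  set U := Submodule.span (LaurentSeries k) (ω '' {j : Fin d | j < i})
  have hN0 : N 0 = 0 := by simpa [absLS] using hNsmul 0 0
  have hNneg : ∀ x, N (-x) = N x := fun x => by
    simpa [absLS] using hNsmul (-1) x
  obtain ⟨l, hl, rfl⟩ := (Finsupp.mem_span_image_iff_linearCombination _).mp hu
  choose a ha using fun j => exists_absLS_sub_polyToLS_le hσ0 hσ1.le (l j)
  set v := ∑ j ∈ l.support, polyToLS k (a j) • ω j
  set s := ∑ j ∈ l.support, (l j - polyToLS k (a j)) • ω j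
  have hv : v ∈ U := Submodule.sum_mem _ fun j hj =>
    Submodule.smul_mem _ _ (Submodule.subset_span ⟨j, hl hj, rfl⟩)
  have hx_mem : ω i - v ∈ latticeA k b :=
    (latticeAddSubgroup k b).sub_mem (hωmem i) <| AddSubgroup.sum_mem _ fun j _ =>
      polyToLS_smul_mem_latticeA _ (hωmem j)
  have hx_not : ω i - v ∉ U := fun h => hωnot (by simpa using U.add_mem h hv)
  have hs : N s ≤ σ * N (ω i - v) := by
    refine hNadd.sum_le hN0 (mul_nonneg hσ0.le (hNadd.nonneg hN0 hNneg _)) fun j hj => ?_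
    have hj : j < i := hl hj
    have hωj : N (ω j) ≤ N (ω i - v) := hωmin j hj.le _ hx_mem fun h => hx_not <|
      Submodule.span_mono (Set.image_mono fun _ (h : _ < j) => h.trans hj) h
    rw [hNsmul]
    exact mul_le_mul (ha j) hωj (hNadd.nonneg hN0 hNneg _) hσ0.le
  have hsplit : ω i - Finsupp.linearCombination (LaurentSeries k) ω l = ω i - v - s := by
    rw [Finsupp.linearCombination_apply, Finsupp.sum, sub_sub, ← Finset.sum_add_distrib]
    simp_rw [← add_smul, add_sub_cancel]
  calc N (ω i) ≤ N (ω i - v) := hωmin i le_rfl _ hx_mem hx_not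
    _ ≤ N (ω i - v - s) := hNadd.le_apply_sub_of_le_mul hN0 hNneg hσ1 hs
    _ = _ := by rw [hsplit]

end GreedyBasis

theorem stmt13_general {k V : Type*} [Field k] [AddCommGroup V] [Module (LaurentSeries k) V]
    (σ : ℝ) (hσ0 : 0 < σ) (hσ1 : σ < 1)
    (N : V → ℝ)
    (hNsmul : ∀ (c : LaurentSeries k) (x : V), N (c • x) = absLS k σ c * N x)
    (hNadd : ∀ x y : V, N (x + y) ≤ max (N x) (N y))
    {d : ℕ}
    (b : Module.Basis (Fin d) (LaurentSeries k) V)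
    (ω : Fin d → V)
    (hωmem : ∀ i, ω i ∈ latticeA k b)
    (hωnot : ∀ i, ω i ∉ Submodule.span (LaurentSeries k) (ω '' {j : Fin d | j < i}))
    (hωmin : ∀ i, ∀ x ∈ latticeA k b,
      x ∉ Submodule.span (LaurentSeries k) (ω '' {j : Fin d | j < i}) → N (ω i) ≤ N x) :
    ∀ i : Fin d, N (ω i) =
      ⨅ u : Submodule.span (LaurentSeries k) (ω '' {j : Fin d | j < i}), N (ω i - u) := by
  intro i
  have hle : ∀ u : Submodule.span (LaurentSeries k) (ω '' {j : Fin d | j < i}),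
      N (ω i) ≤ N (ω i - u) := fun u =>
    apply_le_apply_sub_of_mem_span hσ0 hσ1 hNsmul hNadd hωmem (hωnot i)
      (fun j _ => hωmin j) u.2
  refine le_antisymm (le_ciInf hle) ?_
  simpa using ciInf_le ⟨_, Set.forall_mem_range.mpr hle⟩ 0

/-- For a greedy successive-minimum sequence `ω` of an `A`-lattice, the norm of `ω i` equals
its distance to the span of the previous vectors. -/
theorem stmt13 {k V : Type*} [Field k] [AddCommGroup V] [Module (LaurentSeries k) V]
    (σ : ℝ) (hσ0 : 0 < σ) (hσ1 : σ < 1)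
    (N : V → ℝ)
    (hN0 : ∀ x : V, N x = 0 ↔ x = 0)
    (hNsmul : ∀ (c : LaurentSeries k) (x : V), N (c • x) = absLS k σ c * N x)
    (hNadd : ∀ x y : V, N (x + y) ≤ max (N x) (N y))
    {d : ℕ}
    (b : Module.Basis (Fin d) (LaurentSeries k) V)
    (ω : Fin d → V)
    (hωmem : ∀ i, ω i ∈ latticeA k b)
    (hωnot : ∀ i, ω i ∉ Submodule.span (LaurentSeries k) (ω '' {j : Fin d | j < i}))
    (hωmin : ∀ i, ∀ x ∈ latticeA k b,
      x ∉ Submodule.span (LaurentSeries k) (ω '' {j : Fin d | j < i}) → N (ω i) ≤ N x) :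
    ∀ i : Fin d, N (ω i) =
      ⨅ u : Submodule.span (LaurentSeries k) (ω '' {j : Fin d | j < i}), N (ω i - u) :=
  stmt13_general σ hσ0 hσ1 N hNsmul hNadd b ω hωmem hωnot hωmin
end

section
/- Let Λ be an A-lattice in a finite-dimensional normed K_∞-vector space V. The successive minima are canonical: ||ω_i|| = min{ r ∈ ℝ : the closed ball B_r(0) ∩ Λ contains i linearly independent vectors over K_∞ }. In particular the numbers ||ω_1|| ≤ … ≤ ||ω_d|| do not depend on the choices in the greedy construction. -/
open Filter
open scoped Classical

/-!
For any set `S` and any function `f`, a greedy sequence `ω` (each `ω i` minimises `f` on the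
part of `S` outside the span of its predecessors) realises the minimal radius. The vectors
`ω 0, …, ω i` are independent and have `f ≤ f (ω i)`, since `f ∘ ω` is monotone; conversely,
`i + 1` independent vectors of `S` cannot all lie in the span of `ω 0, …, ω (i-1)`, which has
dimension `≤ i`, and one outside it has `f ≥ f (ω i)`.
-/

section SuccessiveMinima

variable {K V : Type*} [DivisionRing K] [AddCommGroup V] [Module K V]

theorem linearIndependent_of_forall_notMem_span_image_lt :
    ∀ {n : ℕ} (v : Fin n → V),
      (∀ m, v m ∉ Submodule.span K (v '' {j | j < m})) → LinearIndependent K v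
  | 0, _, _ => linearIndependent_empty_type
  | n + 1, v, hv => by
    rw [← Fin.snoc_init_self v]
    refine linearIndependent_finSnoc.2 ⟨linearIndependent_of_forall_notMem_span_image_lt _
      fun m hm => hv m.castSucc (Submodule.span_mono ?_ hm), fun hmem =>
        hv (Fin.last n) (Submodule.span_mono ?_ hmem)⟩
    · rintro _ ⟨j, hj, rfl⟩
      exact ⟨j.castSucc, Fin.castSucc_lt_castSucc_iff.2 hj, rfl⟩
    · rintro _ ⟨j, rfl⟩
      exact ⟨j.castSucc, Fin.castSucc_lt_last j, rfl⟩

theorem card_le_of_linearIndependent_of_range_subset_span_image {ι κ : Type*} [Fintype ι]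
    {u : ι → V} (hu : LinearIndependent K u) (ω : κ → V) (s : Finset κ)
    (h : Set.range u ⊆ Submodule.span K (ω '' s)) : Fintype.card ι ≤ s.card := by
  have h' : Set.range u ⊆ Submodule.span K ((s.image ω : Finset V) : Set V) := by
    rwa [Finset.coe_image]
  calc Fintype.card ι ≤ Fintype.card ((s.image ω : Finset V) : Set V) :=
        linearIndependent_le_span_aux' u hu _ h'
    _ = (s.image ω).card := Fintype.card_coe _
    _ ≤ s.card := Finset.card_image_le

variable (K) {α : Type*} [LinearOrder α]

structure IsSuccessiveMinimaBasis (S : Set V) (f : V → α) {d : ℕ} (ω : Fin d → V) : Prop where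
  mem : ∀ i, ω i ∈ S
  notMem_span : ∀ i, ω i ∉ Submodule.span K (ω '' {j | j < i})
  le : ∀ i, ∀ x ∈ S, x ∉ Submodule.span K (ω '' {j | j < i}) → f (ω i) ≤ f x

namespace IsSuccessiveMinimaBasis

variable {K} {S : Set V} {f : V → α} {d : ℕ} {ω : Fin d → V}

theorem monotone (hω : IsSuccessiveMinimaBasis K S f ω) : Monotone (f ∘ ω) := by
  intro j i hji
  refine hω.le j (ω i) (hω.mem i) fun hmem => hω.notMem_span i (Submodule.span_mono ?_ hmem)
  rintro _ ⟨l, hl, rfl⟩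
  exact ⟨l, lt_of_lt_of_le hl hji, rfl⟩

theorem linearIndependent_castLE (hω : IsSuccessiveMinimaBasis K S f ω) {n : ℕ} (hn : n ≤ d) :
    LinearIndependent K (ω ∘ Fin.castLE hn) := by
  refine linearIndependent_of_forall_notMem_span_image_lt _
    fun m hmem => hω.notMem_span (Fin.castLE hn m) (Submodule.span_mono ?_ hmem)
  rintro _ ⟨j, hj, rfl⟩
  exact ⟨Fin.castLE hn j, hj, rfl⟩

theorem isLeast (hω : IsSuccessiveMinimaBasis K S f ω) (i : Fin d) :
    IsLeast {r | ∃ u : Fin (i.1 + 1) → V, (∀ j, u j ∈ S ∧ f (u j) ≤ r) ∧ LinearIndependent K u}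
      (f (ω i)) := by
  have hi : i.1 + 1 ≤ d := i.2
  refine ⟨⟨ω ∘ Fin.castLE hi, fun j => ⟨hω.mem _, hω.monotone (Nat.lt_succ_iff.1 j.isLt)⟩,
    hω.linearIndependent_castLE hi⟩, ?_⟩
  rintro r ⟨u, hu, hli⟩
  by_contra! hr
  have hspan : Set.range u ⊆ Submodule.span K (ω '' (Finset.Iio i : Set (Fin d))) := by
    rintro _ ⟨j, rfl⟩
    by_contra hj
    exact hr.not_ge (((hω.le i (u j) (hu j).1) (by rwa [Finset.coe_Iio] at hj)).trans (hu j).2)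
  have hcard := card_le_of_linearIndependent_of_range_subset_span_image hli ω _ hspan
  simp only [Fintype.card_fin, Fin.card_Iio] at hcard
  omega

end IsSuccessiveMinimaBasis

end SuccessiveMinima

theorem stmt16_general {k V : Type*} [Field k] [AddCommGroup V] [Module (LaurentSeries k) V]
    (N : V → ℝ)
    {d : ℕ}
    (b : Module.Basis (Fin d) (LaurentSeries k) V)
    (ω : Fin d → V)
    (hωmem : ∀ i, ω i ∈ latticeA k b)
    (hωnot : ∀ i, ω i ∉ Submodule.span (LaurentSeries k) (ω '' {j : Fin d | j < i}))
    (hωmin : ∀ i, ∀ x ∈ latticeA k b,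
      x ∉ Submodule.span (LaurentSeries k) (ω '' {j : Fin d | j < i}) → N (ω i) ≤ N x) :
    ∀ i : Fin d, IsLeast {r : ℝ | ∃ u : Fin (i.1 + 1) → V,
      (∀ j, u j ∈ latticeA k b ∧ N (u j) ≤ r) ∧
      LinearIndependent (LaurentSeries k) u} (N (ω i)) :=
  (IsSuccessiveMinimaBasis.mk hωmem hωnot hωmin).isLeast

/-- The successive minima are canonical: `N (ω i)` is the least `r` such that the closed ball
of radius `r` contains `i + 1` linearly independent lattice vectors; in particular the numbers
`N (ω 0) ≤ … ≤ N (ω (d-1))` are independent of the choices in the greedy construction. -/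
theorem stmt16 {k V : Type*} [Field k] [AddCommGroup V] [Module (LaurentSeries k) V]
    (σ : ℝ) (hσ0 : 0 < σ) (hσ1 : σ < 1)
    (N : V → ℝ)
    (hN0 : ∀ x : V, N x = 0 ↔ x = 0)
    (hNsmul : ∀ (c : LaurentSeries k) (x : V), N (c • x) = absLS k σ c * N x)
    (hNadd : ∀ x y : V, N (x + y) ≤ max (N x) (N y))
    {d : ℕ}
    (b : Module.Basis (Fin d) (LaurentSeries k) V)
    (ω : Fin d → V)
    (hωmem : ∀ i, ω i ∈ latticeA k b)
    (hωnot : ∀ i, ω i ∉ Submodule.span (LaurentSeries k) (ω '' {j : Fin d | j < i}))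
    (hωmin : ∀ i, ∀ x ∈ latticeA k b,
      x ∉ Submodule.span (LaurentSeries k) (ω '' {j : Fin d | j < i}) → N (ω i) ≤ N x) :
    ∀ i : Fin d, IsLeast {r : ℝ | ∃ u : Fin (i.1 + 1) → V,
      (∀ j, u j ∈ latticeA k b ∧ N (u j) ≤ r) ∧
      LinearIndependent (LaurentSeries k) u} (N (ω i)) :=
  stmt16_general N b ω hωmem hωnot hωmin
end

section
/- In the setting of the lattice form of Grothendieck's theorem, the multiset of integers n_1 ≤ … ≤ n_d such that some O_∞-basis v_1,…,v_d of Λ_∞ gives an A-basis π^{n_1}v_1,…,π^{n_d}v_d of Λ is uniquely determined by the pair (Λ, Λ_∞). -/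
/-- The `O∞`-lattice spanned by the vectors `b i`: all `O∞ = k[[π]]`-linear combinations. -/
def latticeO (k : Type*) [Field k] {V : Type*} [AddCommGroup V]
    [Module (LaurentSeries k) V] {d : ℕ} (b : Fin d → V) : Set V :=
  {x | ∃ c : Fin d → PowerSeries k, x = ∑ i, ((c i : LaurentSeries k)) • b i}

open Finset

theorem Monotone.le_apply_iff_card_le {α : Type*} [LinearOrder α] {d : ℕ} {f : Fin d → α}
    (hf : Monotone f) (c : α) (i : Fin d) : c ≤ f i ↔ d - i ≤ #{j | c ≤ f j} := by
  constructor
  · intro hci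
    calc d - i = #(Ici i) := (Fin.card_Ici i).symm
      _ ≤ #{j | c ≤ f j} := card_le_card fun j hj => by
        simpa using hci.trans (hf (mem_Ici.mp hj))
  · intro hcard
    by_contra! hfi
    have hsub : ({j | c ≤ f j} : Finset (Fin d)) ⊆ Ioi i := fun j hj => by
      rw [mem_filter_univ] at hj
      exact mem_Ioi.mpr (lt_of_not_ge fun hji => (hf hji).not_gt (hfi.trans_le hj))
    have := hcard.trans (card_le_card hsub)
    rw [Fin.card_Ioi] at this
    omega

theorem Monotone.eq_of_card_le_apply_eq {α : Type*} [LinearOrder α] {d : ℕ} {f g : Fin d → α}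
    (hf : Monotone f) (hg : Monotone g) (h : ∀ c, #{j | c ≤ f j} = #{j | c ≤ g j}) : f = g := by
  have apply_le {f g : Fin d → α} (hf : Monotone f) (hg : Monotone g)
      (h : ∀ c, #{j | c ≤ f j} = #{j | c ≤ g j}) (i : Fin d) : f i ≤ g i := by
    rw [hg.le_apply_iff_card_le, ← h, ← hf.le_apply_iff_card_le]
  exact funext fun i => le_antisymm (apply_le hf hg h i) (apply_le hg hf (fun c => (h c).symm) i)

theorem LinearIndependent.finrank_span_image_finset {K V ι : Type*} [DivisionRing K]
    [AddCommGroup V] [Module K V] {v : ι → V} (hv : LinearIndependent K v) (s : Finset ι) :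
    Module.finrank K (Submodule.span K (v '' s)) = s.card := by
  rw [Set.image_eq_range]
  exact (finrank_span_eq_card (hv.comp _ Subtype.val_injective)).trans (Fintype.card_coe s)

namespace LatticeSplitting

open HahnSeries Submodule Module
open scoped Pointwise

variable {k : Type*} [Field k]

local notation "π" => (HahnSeries.single (1 : ℤ) (1 : k) : LaurentSeries k)

lemma pi_ne_zero : π ≠ 0 :=
  single_ne_zero one_ne_zero

lemma pi_zpow (t : ℤ) : π ^ t = single t 1 :=
  (RatFunc.single_zpow t).symm

lemma pi_zpow_ne_zero (t : ℤ) : π ^ t ≠ 0 :=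
  zpow_ne_zero t pi_ne_zero

lemma order_pi_zpow (t : ℤ) : (π ^ t).order = t := by
  rw [pi_zpow, order_single one_ne_zero]

lemma polyToLS_monomial (i : ℕ) (a : k) :
    polyToLS k (Polynomial.monomial i a) = single (-(i : ℤ)) a := by
  rw [polyToLS, Polynomial.aeval_monomial, inv_single, inv_one, single_pow, one_pow,
    HahnSeries.algebraMap_apply', PowerSeries.algebraMap_apply, Algebra.algebraMap_self,
    RingHom.id_apply, ofPowerSeries_C, C_apply, single_mul_single, mul_one, zero_add, nsmul_eq_mul,
    mul_neg_one]

lemma coeff_polyToLS_neg (p : Polynomial k) (j : ℕ) :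
    (polyToLS k p).coeff (-j) = p.coeff j := by
  induction p using Polynomial.induction_on' with
  | add f g hf hg => rw [map_add, coeff_add, hf, hg, Polynomial.coeff_add]
  | monomial i a =>
    simp [polyToLS_monomial, coeff_single, Polynomial.coeff_monomial, eq_comm]

lemma coeff_polyToLS_neg_natDegree_ne_zero {p : Polynomial k} (hp : p ≠ 0) :
    (polyToLS k p).coeff (-p.natDegree) ≠ 0 := by
  rwa [coeff_polyToLS_neg, Polynomial.coeff_natDegree, Polynomial.leadingCoeff_ne_zero]

lemma polyToLS_ne_zero {p : Polynomial k} (hp : p ≠ 0) : polyToLS k p ≠ 0 :=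
  ne_zero_of_coeff_ne_zero (coeff_polyToLS_neg_natDegree_ne_zero hp)

lemma order_polyToLS_nonpos {p : Polynomial k} (hp : p ≠ 0) : (polyToLS k p).order ≤ 0 :=
  (order_le_of_coeff_ne_zero (coeff_polyToLS_neg_natDegree_ne_zero hp)).trans (by simp)

lemma order_coe_powerSeries_nonneg (f : PowerSeries k) : 0 ≤ (f : LaurentSeries k).order := by
  rcases eq_or_ne (f : LaurentSeries k) 0 with hf | hf
  · rw [hf, order_zero]
  · exact (le_order_iff_forall hf).mpr fun j hj => by rw [PowerSeries.coeff_coe, if_pos hj]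

lemma pi_zpow_eq_coe_X_pow {t : ℤ} (ht : 0 ≤ t) :
    π ^ t = ((PowerSeries.X ^ t.toNat : PowerSeries k) : LaurentSeries k) := by
  rw [PowerSeries.coe_pow, PowerSeries.coe_X, ← zpow_natCast, Int.toNat_of_nonneg ht]

lemma le_of_polyToLS_mul_pi_zpow_eq {p : Polynomial k} (hp : p ≠ 0) {c : PowerSeries k}
    {m t : ℤ} (h : polyToLS k p * π ^ t = π ^ m * c) : m ≤ t := by
  have hpt : polyToLS k p * π ^ t ≠ 0 := mul_ne_zero (polyToLS_ne_zero hp) (pi_zpow_ne_zero t)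
  have hc : (c : LaurentSeries k) ≠ 0 := by
    rintro hc
    rw [hc, mul_zero] at h
    exact hpt h
  have horder := congrArg order h
  rw [order_mul (polyToLS_ne_zero hp) (pi_zpow_ne_zero t), order_mul (pi_zpow_ne_zero m) hc,
    order_pi_zpow, order_pi_zpow] at horder
  linarith [order_polyToLS_nonpos hp, order_coe_powerSeries_nonneg c]

variable {V : Type*} [AddCommGroup V] [Module (LaurentSeries k) V] {d : ℕ}

lemma mem_latticeA_self (b : Fin d → V) (i : Fin d) : b i ∈ latticeA k b :=
  ⟨Pi.single i 1, by simp [Pi.single_apply, apply_ite]⟩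

lemma coe_smul_mem_latticeO (b : Fin d → V) (i : Fin d) (f : PowerSeries k) :
    (f : LaurentSeries k) • b i ∈ latticeO k b :=
  ⟨Pi.single i f, by simp [Pi.single_apply, apply_ite]⟩

variable (k) in
/-- For the norm on `V` with unit ball `ΛO`, `ΛA ∩ π ^ m • ΛO` is the set of vectors of `ΛA` of
norm at most `|π| ^ m`; the dimension of its span counts the successive minima of `ΛA` up to that
radius. -/
noncomputable def ballSpan (ΛA ΛO : Set V) (m : ℤ) : Submodule (LaurentSeries k) V :=
  span (LaurentSeries k) (ΛA ∩ π ^ m • ΛO)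

theorem ballSpan_latticeA_latticeO {v : Fin d → V}
    (hv : LinearIndependent (LaurentSeries k) v) (n : Fin d → ℤ) (m : ℤ) :
    ballSpan k (latticeA k fun i => π ^ n i • v i) (latticeO k v) m =
      span (LaurentSeries k) (v '' {j | m ≤ n j}) := by
  apply le_antisymm
  · rw [ballSpan, span_le]
    rintro _ ⟨⟨a, rfl⟩, _, ⟨c, rfl⟩, hac⟩
    simp only [smul_sum, smul_smul] at hac
    refine sum_mem fun i _ => ?_
    rcases eq_or_ne (a i) 0 with hai | hai
    · simp [hai]
    · have hmn : m ≤ n i := le_of_polyToLS_mul_pi_zpow_eq hai (hv.eq_coords_of_eq hac i).symm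
      rw [smul_smul]
      exact smul_mem _ _ (subset_span ⟨i, hmn, rfl⟩)
  · rw [span_le]
    rintro _ ⟨i, hmn : m ≤ n i, rfl⟩
    have hA : π ^ n i • v i ∈ latticeA k fun i => π ^ n i • v i :=
      mem_latticeA_self (fun i => π ^ n i • v i) i
    have hO : π ^ n i • v i ∈ π ^ m • latticeO k v := by
      have h := coe_smul_mem_latticeO (k := k) v i (PowerSeries.X ^ (n i - m).toNat)
      rw [← pi_zpow_eq_coe_X_pow (sub_nonneg.mpr hmn)] at h
      convert Set.smul_mem_smul_set (a := π ^ m) h using 1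
      rw [smul_smul, ← zpow_add₀ pi_ne_zero, add_sub_cancel]
    have h := smul_mem (ballSpan k _ _ m) (π ^ (-n i)) (subset_span ⟨hA, hO⟩)
    rwa [smul_smul, ← zpow_add₀ pi_ne_zero, neg_add_cancel, zpow_zero, one_smul] at h

theorem finrank_ballSpan_latticeA_latticeO {v : Fin d → V}
    (hv : LinearIndependent (LaurentSeries k) v) (n : Fin d → ℤ) (m : ℤ) :
    finrank (LaurentSeries k)
      (ballSpan k (latticeA k fun i => π ^ n i • v i) (latticeO k v) m) = #{j | m ≤ n j} := by
  rw [ballSpan_latticeA_latticeO hv, ← hv.finrank_span_image_finset, coe_filter_univ]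

end LatticeSplitting

/-- **Uniqueness of the splitting type.** The nondecreasing sequence of integers
`n₁ ≤ … ≤ n_d` appearing in the lattice form of Grothendieck's theorem is uniquely
determined by the pair of lattices `(Λ, Λ∞)`. -/
theorem stmt19 {k V : Type*} [Field k] [AddCommGroup V] [Module (LaurentSeries k) V]
    {d : ℕ} (bL bO : Module.Basis (Fin d) (LaurentSeries k) V)
    (v v' : Fin d → V) (n n' : Fin d → ℤ)
    (hmono : Monotone n) (hmono' : Monotone n')
    (hli : LinearIndependent (LaurentSeries k) v)
    (hli' : LinearIndependent (LaurentSeries k) v')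
    (hO : latticeO k v = latticeO k bO) (hO' : latticeO k v' = latticeO k bO)
    (hA : latticeA k (fun i =>
        ((HahnSeries.single (1 : ℤ) (1 : k) : LaurentSeries k) ^ (n i)) • v i) = latticeA k bL)
    (hA' : latticeA k (fun i =>
        ((HahnSeries.single (1 : ℤ) (1 : k) : LaurentSeries k) ^ (n' i)) • v' i) = latticeA k bL) :
    n = n' := by
  refine hmono.eq_of_card_le_apply_eq hmono' fun m => ?_
  rw [← LatticeSplitting.finrank_ballSpan_latticeA_latticeO hli,
    ← LatticeSplitting.finrank_ballSpan_latticeA_latticeO hli', hA, hA', hO, hO']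
end
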